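/- arXiv:2106.15084 — 5 statements merged into one kernel-verified Lean document; each statement's English description precedes it below -/
import Mathlib

section
/- Let u ∈ ℝ and let x₁, x₀ ∈ ℝ satisfy x₁ ≥ 0, x₀ ≥ 0, x₁ + x₀ = 1 and u·x₁ − x₁·log(x₁) − x₀·log(x₀) ≥ log(1 + exp(u)) (with the convention 0·log 0 = 0). Then necessarily x₁ = exp(u)/(1 + exp(u)) and x₀ = 1/(1 + exp(u)). -/
lemma gibbs_ge (a b : ℝ) (ha : 0 < a) (hb : 0 < b) : a - b ≤ a * Real.log (a / b) := by
  have h := Real.log_le_sub_one_of_pos (div_pos hb ha)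
  have hlog : Real.log (a / b) = - Real.log (b / a) := by
    rw [← Real.log_inv]; congr 1; field_simp
  have hab : a * (b / a) = b := by field_simp
  rw [hlog]
  nlinarith [mul_le_mul_of_nonneg_left h ha.le]

lemma gibbs_gt (a b : ℝ) (ha : 0 < a) (hb : 0 < b) (hne : a ≠ b) :
    a - b < a * Real.log (a / b) := by
  have hne' : b / a ≠ 1 := by
    intro hh
    exact hne (by field_simp at hh; linarith)
  have h := Real.log_lt_sub_one_of_pos (div_pos hb ha) hne'
  have hlog : Real.log (a / b) = - Real.log (b / a) := by
    rw [← Real.log_inv]; congr 1; field_simp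
  have hab : a * (b / a) = b := by field_simp
  rw [hlog]
  nlinarith [mul_lt_mul_of_pos_left h ha]

/-- The representative-agent constraint forces the logit
choice probabilities. -/
theorem stmt3 (u x1 x0 : ℝ) (hx1 : x1 ≥ 0) (hx0 : x0 ≥ 0) (hsum : x1 + x0 = 1)
    (h : u * x1 - x1 * Real.log x1 - x0 * Real.log x0 ≥ Real.log (1 + Real.exp u)) :
    x1 = Real.exp u / (1 + Real.exp u) ∧ x0 = 1 / (1 + Real.exp u) := by
  set E := Real.exp u with hEdef
  have hE : 0 < E := Real.exp_pos u
  have hL : 0 < Real.log (1 + E) := Real.log_pos (by linarith)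
  rcases eq_or_lt_of_le hx1 with h1 | h1
  · exfalso
    have hx0' : x0 = 1 := by linarith
    rw [← h1, hx0'] at h
    simp [Real.log_one] at h
    linarith
  rcases eq_or_lt_of_le hx0 with h0 | h0
  · exfalso
    have hx1' : x1 = 1 := by linarith
    rw [← h0, hx1'] at h
    simp [Real.log_one] at h
    have hu : u < Real.log (1 + E) := by
      have := Real.log_lt_log hE (by linarith : E < 1 + E)
      rwa [hEdef, Real.log_exp] at this
    linarith
  set p := E / (1 + E) with hpdef
  set q := 1 / (1 + E) with hqdef
  have hp : 0 < p := div_pos hE (by linarith)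
  have hq : 0 < q := by positivity
  have hpq : p + q = 1 := by rw [hpdef, hqdef]; field_simp; ring
  have hlogp : Real.log p = u - Real.log (1 + E) := by
    rw [hpdef, Real.log_div (ne_of_gt hE) (by positivity), hEdef, Real.log_exp]
  have hlogq : Real.log q = - Real.log (1 + E) := by
    rw [hqdef, Real.log_div one_ne_zero (by positivity), Real.log_one]
    ring
  have key : x1 * Real.log (x1 / p) + x0 * Real.log (x0 / q)
      = Real.log (1 + E) - (u * x1 - x1 * Real.log x1 - x0 * Real.log x0) := by
    rw [Real.log_div (ne_of_gt h1) (ne_of_gt hp),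
        Real.log_div (ne_of_gt h0) (ne_of_gt hq), hlogp, hlogq]
    nlinarith [hsum]
  have hD : x1 * Real.log (x1 / p) + x0 * Real.log (x0 / q) ≤ 0 := by
    rw [key]; linarith
  by_cases hxp : x1 = p
  · refine ⟨hxp, ?_⟩
    linarith
  · exfalso
    have hx0q : x0 ≠ q := fun hh => hxp (by linarith)
    have g1 := gibbs_gt x1 p h1 hp hxp
    have g2 := gibbs_ge x0 q h0 hq
    linarith
end

section
/- Let n, K be positive integers, let A ⊆ {0,1}ⁿ be a nonempty finite set, let λ₁, …, λ_K ≥ 0, and for each k ∈ {1, …, K} let β_{k,0}, β_{k,1}, …, β_{k,n} ∈ ℝ and define u_k(a) = β_{k,0} + Σ_{i=1}^n β_{k,i}·a_i for a ∈ A. Then the maximum over a ∈ A of Σ_{k=1}^K λ_k · exp(u_k(a))/(1 + exp(u_k(a))) equals the maximum of Σ_{k=1}^K λ_k · x_{k,1} over all tuples (a, (u_k), (x_{k,1}), (x_{k,0})) with a ∈ A satisfying, for every k: u_k = u_k(a); x_{k,1} + x_{k,0} = 1; x_{k,1} ≥ 0; x_{k,0} ≥ 0; and u_k·x_{k,1}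 − x_{k,1}·log(x_{k,1}) − x_{k,0}·log(x_{k,0}) ≥ log(1 + exp(u_k)) (with the convention 0·log 0 = 0). Moreover, for each a ∈ A there is exactly one feasible tuple extending a, namely x_{k,1} = exp(u_k(a))/(1 + exp(u_k(a))) and x_{k,0} = 1/(1 + exp(u_k(a))). -/
lemma logit_eq (u : ℝ) :
    u * (Real.exp u / (1 + Real.exp u)) -
      (Real.exp u / (1 + Real.exp u)) * Real.log (Real.exp u / (1 + Real.exp u)) -
      (1 / (1 + Real.exp u)) * Real.log (1 / (1 + Real.exp u)) =
      Real.log (1 + Real.exp u) := by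
  have hE : (0:ℝ) < Real.exp u := Real.exp_pos u
  have hD : (0:ℝ) < 1 + Real.exp u := by linarith
  rw [Real.log_div (ne_of_gt hE) (ne_of_gt hD), Real.log_exp,
    one_div, Real.log_inv]
  field_simp
  ring

lemma key (u x1 x0 : ℝ) (hsum : x1 + x0 = 1) (h1 : 0 ≤ x1) (h0 : 0 ≤ x0)
    (hge : u * x1 - x1 * Real.log x1 - x0 * Real.log x0 ≥ Real.log (1 + Real.exp u)) :
    x1 = Real.exp u / (1 + Real.exp u) ∧ x0 = 1 / (1 + Real.exp u) := by
  have hE : (0:ℝ) < Real.exp u := Real.exp_pos u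
  have hD : (0:ℝ) < 1 + Real.exp u := by linarith
  set L := Real.log (1 + Real.exp u) with hL
  have hLpos : 0 < L := Real.log_pos (by linarith)
  have huL : u < L := by
    calc u = Real.log (Real.exp u) := (Real.log_exp u).symm
    _ < L := Real.log_lt_log hE (by linarith)
  set p := Real.exp u / (1 + Real.exp u) with hpdef
  set q := 1 / (1 + Real.exp u) with hqdef
  have hp : 0 < p := div_pos hE hD
  have hq : 0 < q := div_pos one_pos hD
  have hpq : p + q = 1 := by rw [hpdef, hqdef]; field_simp; ring
  have hlogp : Real.log p = u - L := by
    rw [hpdef, Real.log_div (ne_of_gt hE) (ne_of_gt hD), Real.log_exp]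
  have hlogq : Real.log q = -L := by
    rw [hqdef, one_div, Real.log_inv]
  -- boundary cases
  rcases eq_or_lt_of_le h1 with h1z | h1pos
  · exfalso
    have hx0 : x0 = 1 := by linarith
    rw [← h1z, hx0] at hge
    norm_num [Real.log_one, Real.log_zero] at hge
    linarith
  rcases eq_or_lt_of_le h0 with h0z | h0pos
  · exfalso
    have hx1 : x1 = 1 := by linarith
    rw [← h0z, hx1] at hge
    norm_num [Real.log_one, Real.log_zero] at hge
    linarith
  -- interior
  have hx1 : x1 = p := by
    by_contra hne
    have hr1 : p / x1 ≠ 1 := by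
      intro h
      apply hne
      field_simp at h
      linarith
    have hb1 : Real.log (p / x1) < p / x1 - 1 :=
      Real.log_lt_sub_one_of_pos (div_pos hp h1pos) hr1
    have hb0 : Real.log (q / x0) ≤ q / x0 - 1 :=
      Real.log_le_sub_one_of_pos (div_pos hq h0pos)
    have hm1 : x1 * Real.log (p / x1) < p - x1 := by
      have := mul_lt_mul_of_pos_left hb1 h1pos
      have hx : x1 * (p / x1 - 1) = p - x1 := by field_simp
      linarith [this, hx.le]
    have hm0 : x0 * Real.log (q / x0) ≤ q - x0 := by
      have := mul_le_mul_of_nonneg_left hb0 h0pos.le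
      have hx : x0 * (q / x0 - 1) = q - x0 := by field_simp
      linarith
    have hsum' : x1 * Real.log (p / x1) + x0 * Real.log (q / x0) < 0 := by
      have : (p - x1) + (q - x0) = 0 := by linarith
      linarith
    have hexp : x1 * Real.log (p / x1) + x0 * Real.log (q / x0) =
        (u * x1 - x1 * Real.log x1 - x0 * Real.log x0) - L := by
      rw [Real.log_div (ne_of_gt hp) (ne_of_gt h1pos),
        Real.log_div (ne_of_gt hq) (ne_of_gt h0pos), hlogp, hlogq]
      ring_nf
      nlinarith [hsum]
    rw [hexp] at hsum'
    linarith
  refine ⟨hx1, ?_⟩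
  have : x0 = 1 - p := by linarith
  rw [this]; linarith


/-- Equivalence of the logit-based SOCPD problem with its bilinear
reformulation, together with the unique feasible extension of each product. -/
theorem stmt4 (n K : ℕ) (hn : 0 < n) (hK : 0 < K)
    (A : Finset (Fin n → ℝ)) (hA : A.Nonempty)
    (hbin : ∀ a ∈ A, ∀ i, a i = 0 ∨ a i = 1)
    (lam : Fin K → ℝ) (hlam : ∀ k, 0 ≤ lam k)
    (β0 : Fin K → ℝ) (β : Fin K → Fin n → ℝ)
    (U : (Fin n → ℝ) → Fin K → ℝ)
    (hU : ∀ a k, U a k = β0 k + ∑ i, β k i * a i)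
    (Feas : (Fin n → ℝ) → (Fin K → ℝ) → (Fin K → ℝ) → (Fin K → ℝ) → Prop)
    (hFeas : ∀ a uv x1 x0, Feas a uv x1 x0 ↔
      (a ∈ A ∧ ∀ k, uv k = U a k ∧ x1 k + x0 k = 1 ∧ 0 ≤ x1 k ∧ 0 ≤ x0 k ∧
        uv k * x1 k - x1 k * Real.log (x1 k) - x0 k * Real.log (x0 k) ≥
          Real.log (1 + Real.exp (uv k)))) :
    (∃ M : ℝ,
      IsGreatest {v | ∃ a ∈ A,
        v = ∑ k, lam k * (Real.exp (U a k) / (1 + Real.exp (U a k)))} M ∧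
      IsGreatest {v | ∃ a uv x1 x0, Feas a uv x1 x0 ∧ v = ∑ k, lam k * x1 k} M) ∧
    (∀ a ∈ A,
      Feas a (fun k => U a k)
        (fun k => Real.exp (U a k) / (1 + Real.exp (U a k)))
        (fun k => 1 / (1 + Real.exp (U a k))) ∧
      ∀ uv x1 x0, Feas a uv x1 x0 →
        uv = (fun k => U a k) ∧
        x1 = (fun k => Real.exp (U a k) / (1 + Real.exp (U a k))) ∧
        x0 = (fun k => 1 / (1 + Real.exp (U a k)))) := by
  have hcan : ∀ a ∈ A,
      Feas a (fun k => U a k)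
        (fun k => Real.exp (U a k) / (1 + Real.exp (U a k)))
        (fun k => 1 / (1 + Real.exp (U a k))) := by
    intro a ha
    rw [hFeas]
    refine ⟨ha, fun k => ⟨rfl, ?_, ?_, ?_, ?_⟩⟩
    · have hD : (0:ℝ) < 1 + Real.exp (U a k) := by positivity
      field_simp
      ring
    · positivity
    · positivity
    · exact ge_of_eq (logit_eq (U a k))
  have huniq : ∀ a, ∀ uv x1 x0, Feas a uv x1 x0 →
      uv = (fun k => U a k) ∧
      x1 = (fun k => Real.exp (U a k) / (1 + Real.exp (U a k))) ∧
      x0 = (fun k => 1 / (1 + Real.exp (U a k))) := by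
    intro a uv x1 x0 hf
    rw [hFeas] at hf
    obtain ⟨_, h⟩ := hf
    have huv : ∀ k, uv k = U a k := fun k => (h k).1
    have hx : ∀ k, x1 k = Real.exp (U a k) / (1 + Real.exp (U a k)) ∧
        x0 k = 1 / (1 + Real.exp (U a k)) := by
      intro k
      obtain ⟨h1, h2, h3, h4, h5⟩ := h k
      rw [h1] at h5
      exact key (U a k) (x1 k) (x0 k) h2 h3 h4 h5
    exact ⟨funext huv, funext fun k => (hx k).1, funext fun k => (hx k).2⟩
  set F : (Fin n → ℝ) → ℝ :=
    fun a => ∑ k, lam k * (Real.exp (U a k) / (1 + Real.exp (U a k))) with hF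
  constructor
  · refine ⟨(A.image F).max' (hA.image F), ?_, ?_⟩
    · constructor
      · obtain ⟨a, ha, hFa⟩ := Finset.mem_image.mp ((A.image F).max'_mem (hA.image F))
        exact ⟨a, ha, hFa.symm⟩
      · rintro v ⟨a, ha, rfl⟩
        exact (A.image F).le_max' _ (Finset.mem_image_of_mem F ha)
    · constructor
      · obtain ⟨a, ha, hFa⟩ := Finset.mem_image.mp ((A.image F).max'_mem (hA.image F))
        exact ⟨a, _, _, _, hcan a ha, hFa.symm⟩
      · rintro v ⟨a, uv, x1, x0, hf, rfl⟩
        have ha : a ∈ A := ((hFeas a uv x1 x0).mp hf).1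
        obtain ⟨_, hx1, _⟩ := huniq a uv x1 x0 hf
        have : ∑ k, lam k * x1 k = F a := by rw [hx1]
        rw [this]
        exact (A.image F).le_max' _ (Finset.mem_image_of_mem F ha)
  · intro a ha
    exact ⟨hcan a ha, huniq a⟩
end

section
/- Let K be a positive integer, let A be a nonempty finite set, let λ₁, …, λ_K ≥ 0 with Σ_{k=1}^K λ_k = 1, and let x_k : A → ℝ for k ∈ {1, …, K}. Suppose L, U > 0 satisfy L ≤ x_k(a) ≤ U for all k and all a ∈ A. Define f(a) = Σ_{k=1}^K λ_k·x_k(a) and g(a) = Π_{k=1}^K x_k(a)^{λ_k}. If a* maximizes f over A and â maximizes g over A, then f(â) ≥ f(a*) / (Σ_{k=1}^K λ_k·(U/L)^{1−λ_k}). -/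
/-- A priori performance guarantee of the geometric-mean solution
with respect to the arithmetic-mean objective. -/
theorem stmt6 {α : Type*} (K : ℕ) (hK : 0 < K)
    (A : Finset α) (hA : A.Nonempty)
    (lam : Fin K → ℝ) (hlam : ∀ k, 0 ≤ lam k) (hsum : ∑ k, lam k = 1)
    (x : Fin K → α → ℝ) (L Upp : ℝ) (hL : 0 < L) (hUpp : 0 < Upp)
    (hbound : ∀ k, ∀ a ∈ A, L ≤ x k a ∧ x k a ≤ Upp)
    (f g : α → ℝ)
    (hf : ∀ a, f a = ∑ k, lam k * x k a)
    (hg : ∀ a, g a = ∏ k, x k a ^ lam k)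
    (astar ahat : α)
    (hastar : astar ∈ A ∧ ∀ a ∈ A, f a ≤ f astar)
    (hahat : ahat ∈ A ∧ ∀ a ∈ A, g a ≤ g ahat) :
    f ahat ≥ f astar / (∑ k, lam k * (Upp / L) ^ (1 - lam k)) := by
  obtain ⟨haA, hamax⟩ := hastar
  obtain ⟨hbA, hbmax⟩ := hahat
  set r := Upp / L with hr
  have hr0 : 0 < r := div_pos hUpp hL
  set C := ∑ k, lam k * r ^ (1 - lam k) with hC
  have hC0 : 0 < C := by
    obtain ⟨k, hk⟩ : ∃ k, 0 < lam k := by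
      by_contra h
      push_neg at h
      have : ∑ k, lam k = 0 :=
        Finset.sum_eq_zero fun k _ => le_antisymm (h k) (hlam k)
      rw [hsum] at this; norm_num at this
    refine Finset.sum_pos' (fun j _ => mul_nonneg (hlam j) (Real.rpow_nonneg hr0.le _)) ⟨k, Finset.mem_univ k, ?_⟩
    exact mul_pos hk (Real.rpow_pos_of_pos hr0 _)
  have key : ∀ a ∈ A, f a ≤ C * g a := by
    intro a ha
    have hx : ∀ j, 0 < x j a := fun j => lt_of_lt_of_le hL (hbound j a ha).1
    have hxk : ∀ k, x k a ≤ r ^ (1 - lam k) * g a := by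
      intro k
      have herase : ∑ j ∈ Finset.univ.erase k, lam j = 1 - lam k := by
        rw [Finset.sum_erase_eq_sub (Finset.mem_univ k), hsum]
      have h1 : x k a = x k a ^ lam k * x k a ^ (1 - lam k) := by
        have he : lam k + (1 - lam k) = 1 := by ring
        rw [← Real.rpow_add (hx k), he, Real.rpow_one]
      have h2 : x k a ^ (1 - lam k) = ∏ j ∈ Finset.univ.erase k, x k a ^ lam j := by
        rw [← Real.rpow_sum_of_pos (hx k), herase]
      have h3 : ∏ j ∈ Finset.univ.erase k, x k a ^ lam j
          ≤ ∏ j ∈ Finset.univ.erase k, (x j a * r) ^ lam j := by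
        refine Finset.prod_le_prod (fun j _ => Real.rpow_nonneg (hx k).le _) ?_
        intro j _
        refine Real.rpow_le_rpow (hx k).le ?_ (hlam j)
        calc x k a ≤ Upp := (hbound k a ha).2
          _ = L * r := by rw [hr]; field_simp
          _ ≤ x j a * r := mul_le_mul_of_nonneg_right (hbound j a ha).1 hr0.le
      have h4 : ∏ j ∈ Finset.univ.erase k, (x j a * r) ^ lam j
          = (∏ j ∈ Finset.univ.erase k, x j a ^ lam j) * r ^ (1 - lam k) := by
        rw [Finset.prod_congr rfl (fun j _ => Real.mul_rpow (hx j).le hr0.le),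
          Finset.prod_mul_distrib, ← Real.rpow_sum_of_pos hr0, herase]
      have hg' : g a = x k a ^ lam k * ∏ j ∈ Finset.univ.erase k, x j a ^ lam j := by
        rw [hg, ← Finset.mul_prod_erase _ _ (Finset.mem_univ k)]
      have hxkpos : 0 ≤ x k a ^ lam k := Real.rpow_nonneg (hx k).le _
      calc x k a = x k a ^ lam k * x k a ^ (1 - lam k) := h1
        _ = x k a ^ lam k * ∏ j ∈ Finset.univ.erase k, x k a ^ lam j := by rw [h2]
        _ ≤ x k a ^ lam k * ∏ j ∈ Finset.univ.erase k, (x j a * r) ^ lam j :=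
            mul_le_mul_of_nonneg_left h3 hxkpos
        _ = (x k a ^ lam k * ∏ j ∈ Finset.univ.erase k, x j a ^ lam j) * r ^ (1 - lam k) := by
            rw [h4]; ring
        _ = r ^ (1 - lam k) * g a := by rw [hg']; ring
    rw [hf]
    calc ∑ k, lam k * x k a ≤ ∑ k, lam k * (r ^ (1 - lam k) * g a) :=
          Finset.sum_le_sum fun k _ => mul_le_mul_of_nonneg_left (hxk k) (hlam k)
      _ = C * g a := by rw [hC, Finset.sum_mul]; exact Finset.sum_congr rfl fun k _ => by ring
  have amgm : g ahat ≤ f ahat := by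
    rw [hf, hg]
    exact Real.geom_mean_le_arith_mean_weighted _ _ _ (fun k _ => hlam k) (by simpa using hsum)
      (fun k _ => (lt_of_lt_of_le hL (hbound k ahat hbA).1).le)
  have hfinal : f astar ≤ C * f ahat :=
    calc f astar ≤ C * g astar := key astar haA
      _ ≤ C * g ahat := mul_le_mul_of_nonneg_left (hbmax astar haA) hC0.le
      _ ≤ C * f ahat := mul_le_mul_of_nonneg_left amgm hC0.le
  rw [ge_iff_le, div_le_iff₀ hC0]
  linarith
end

section
/- Let K be a positive integer, let λ₁, …, λ_K ≥ 0 with Σ_{k=1}^K λ_k = 1, let 0 < L ≤ U, and let x₁, …, x_K ∈ ℝ with L ≤ x_k ≤ U for all k. Then Σ_{k=1}^K λ_k·x_k ≤ (Σ_{k=1}^K λ_k·(U/L)^{1−λ_k}) · Π_{k=1}^K x_k^{λ_k}. -/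
/-!
Write `G = ∏ⱼ xⱼ ^ λⱼ`. Splitting off the `k`-th factor and bounding the others below by `L`
gives `xₖ ^ λₖ * L ^ (1 - λₖ) ≤ G`, while `xₖ = xₖ ^ (1 - λₖ) * xₖ ^ λₖ ≤ U ^ (1 - λₖ) * xₖ ^ λₖ`.
Together, `xₖ ≤ (U / L) ^ (1 - λₖ) * G` for every `k`; averaging with the weights `λₖ` gives the bound.
-/

open Finset Real

theorem rpow_sum_le_prod_rpow {ι : Type*} (s : Finset ι) {w x : ι → ℝ} {L : ℝ} (hL : 0 ≤ L)
    (hw : ∀ j ∈ s, 0 ≤ w j) (hx : ∀ j ∈ s, L ≤ x j) :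
    L ^ (∑ j ∈ s, w j) ≤ ∏ j ∈ s, x j ^ w j := by
  rw [rpow_sum_of_nonneg hL hw]
  exact prod_le_prod (fun j _ ↦ rpow_nonneg hL _)
    fun j hj ↦ rpow_le_rpow hL (hx j hj) (hw j hj)

theorem rpow_mul_rpow_one_sub_le_prod_rpow {ι : Type*} [Fintype ι] [DecidableEq ι]
    {w x : ι → ℝ} {L : ℝ} (hL : 0 ≤ L) (hw : ∀ j, 0 ≤ w j) (hsum : ∑ j, w j = 1)
    (hx : ∀ j, L ≤ x j) (k : ι) :
    x k ^ w k * L ^ (1 - w k) ≤ ∏ j, x j ^ w j := by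
  have hsum_erase : ∑ j ∈ univ.erase k, w j = 1 - w k := by
    rw [← hsum, ← add_sum_erase univ w (mem_univ k), add_sub_cancel_left]
  rw [← mul_prod_erase univ (fun j ↦ x j ^ w j) (mem_univ k), ← hsum_erase]
  exact mul_le_mul_of_nonneg_left
    (rpow_sum_le_prod_rpow _ hL (fun j _ ↦ hw j) fun j _ ↦ hx j) (rpow_nonneg (hL.trans (hx k)) _)

theorem le_rpow_one_sub_mul_rpow {a b t : ℝ} (ha : 0 ≤ a) (hab : a ≤ b) (ht : t ≤ 1) :
    a ≤ b ^ (1 - t) * a ^ t := by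
  calc a = a ^ (1 - t) * a ^ t := by rw [← rpow_add' ha (by simp), sub_add_cancel, rpow_one]
    _ ≤ b ^ (1 - t) * a ^ t := by gcongr

theorem le_div_rpow_mul_prod_rpow {ι : Type*} [Fintype ι]
    {w x : ι → ℝ} {L U : ℝ} (hL : 0 < L) (hw : ∀ j, 0 ≤ w j) (hsum : ∑ j, w j = 1)
    (hx : ∀ j, L ≤ x j) {k : ι} (hxU : x k ≤ U) :
    x k ≤ (U / L) ^ (1 - w k) * ∏ j, x j ^ w j := by
  classical
  have hxk : 0 ≤ x k := hL.le.trans (hx k)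
  have hwk : w k ≤ 1 := hsum ▸ single_le_sum (fun j _ ↦ hw j) (mem_univ k)
  calc x k ≤ U ^ (1 - w k) * x k ^ w k := le_rpow_one_sub_mul_rpow hxk hxU hwk
    _ = (U / L) ^ (1 - w k) * (x k ^ w k * L ^ (1 - w k)) := by
      rw [div_rpow (hxk.trans hxU) hL.le]
      field_simp
    _ ≤ (U / L) ^ (1 - w k) * ∏ j, x j ^ w j :=
      mul_le_mul_of_nonneg_left (rpow_mul_rpow_one_sub_le_prod_rpow hL.le hw hsum hx k)
        (rpow_nonneg (div_nonneg (hxk.trans hxU) hL.le) _)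

theorem weighted_sum_le_mul_prod_rpow {ι : Type*} [Fintype ι]
    {w x : ι → ℝ} {L U : ℝ} (hL : 0 < L) (hw : ∀ j, 0 ≤ w j) (hsum : ∑ j, w j = 1)
    (hx : ∀ j, L ≤ x j ∧ x j ≤ U) :
    ∑ k, w k * x k ≤ (∑ k, w k * (U / L) ^ (1 - w k)) * ∏ k, x k ^ w k := by
  rw [sum_mul]
  refine sum_le_sum fun k _ ↦ ?_
  rw [mul_assoc]
  exact mul_le_mul_of_nonneg_left
    (le_div_rpow_mul_prod_rpow hL hw hsum (fun j ↦ (hx j).1) (hx k).2) (hw k)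

theorem stmt8_general (K : ℕ)
    (lam : Fin K → ℝ) (hlam : ∀ k, 0 ≤ lam k) (hsum : ∑ k, lam k = 1)
    (L Upp : ℝ) (hL : 0 < L)
    (x : Fin K → ℝ) (hx : ∀ k, L ≤ x k ∧ x k ≤ Upp) :
    ∑ k, lam k * x k ≤
      (∑ k, lam k * (Upp / L) ^ (1 - lam k)) * ∏ k, x k ^ lam k :=
  weighted_sum_le_mul_prod_rpow hL hlam hsum hx

/-- Bound on the weighted arithmetic mean in terms of the weighted
geometric mean and the ratio `U/L`. -/
theorem stmt8 (K : ℕ) (hK : 0 < K)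
    (lam : Fin K → ℝ) (hlam : ∀ k, 0 ≤ lam k) (hsum : ∑ k, lam k = 1)
    (L Upp : ℝ) (hL : 0 < L) (hLU : L ≤ Upp)
    (x : Fin K → ℝ) (hx : ∀ k, L ≤ x k ∧ x k ≤ Upp) :
    ∑ k, lam k * x k ≤
      (∑ k, lam k * (Upp / L) ^ (1 - lam k)) * ∏ k, x k ^ lam k :=
  stmt8_general K lam hlam hsum L Upp hL x hx
end

section
/- Let K be a positive integer and set p_L = 1/(100·K) and p_U = 1 − 1/(100·K). Let s and s̃ be integers with 0 ≤ s, 0 ≤ s̃ ≤ K, and s̃ > s. Then p_U·s̃ > p_L·K + (1 − p_L)·s. -/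
/-! Writing `p = 1 / (100 K)`, the term `p K` equals `1 / 100`, while each extra satisfied clause
gains `1 - p ≥ 99 / 100` on the left-hand side. -/

lemma add_mul_lt_mul_of_add_one_le {a c s t : ℝ} (hc : 0 ≤ c) (hac : a < c) (hst : s + 1 ≤ t) :
    a + c * s < c * t :=
  calc a + c * s < c * (s + 1) := by linarith
    _ ≤ c * t := mul_le_mul_of_nonneg_left hst hc

lemma one_div_hundred_mul_mul_cancel {K : ℝ} (hK : K ≠ 0) : 1 / (100 * K) * K = 1 / 100 := by
  field_simp

lemma one_div_hundred_lt_one_sub_one_div_hundred_mul {K : ℝ} (hK : 1 ≤ K) :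
    1 / 100 < 1 - 1 / (100 * K) := by
  have : 1 / (100 * K) ≤ 1 / 100 :=
    one_div_le_one_div_of_le (by norm_num) (by linarith)
  linarith

theorem stmt13_general (K : ℕ) (hK : 0 < K)
    (s st : ℤ) (hgt : s < st) :
    (1 - 1 / (100 * (K : ℝ))) * (st : ℝ) >
      (1 / (100 * (K : ℝ))) * (K : ℝ) + (1 - 1 / (100 * (K : ℝ))) * (s : ℝ) := by
  have hK' : (1 : ℝ) ≤ K := by exact_mod_cast hK
  have hst : (s : ℝ) + 1 ≤ st := by exact_mod_cast hgt
  have hgap := one_div_hundred_lt_one_sub_one_div_hundred_mul hK'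
  rw [one_div_hundred_mul_mul_cancel (by positivity)]
  exact add_mul_lt_mul_of_add_one_le (by linarith) hgap hst

/-- Key inequality in the NP-hardness reduction from MAX 3SAT. -/
theorem stmt13 (K : ℕ) (hK : 0 < K)
    (s st : ℤ) (hs : 0 ≤ s) (hst0 : 0 ≤ st) (hstK : st ≤ (K : ℤ)) (hgt : s < st) :
    (1 - 1 / (100 * (K : ℝ))) * (st : ℝ) >
      (1 / (100 * (K : ℝ))) * (K : ℝ) + (1 - 1 / (100 * (K : ℝ))) * (s : ℝ) :=
  stmt13_general K hK s st hgt
end
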